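/- (Vaughan's identity) Let U and V be real numbers with U > 1 and V > 1, and let k be a positive integer with k > U. Then Λ(k) = ∑_{dm = k, d ≤ V} μ(d)·log m − ∑_{dlm = k, d ≤ V, m ≤ U} μ(d)·Λ(m) − ∑_{dlm = k, d ≤ V, m > U, dl > V} μ(d)·Λ(m), where the first sum is over ordered pairs (d, m) of positive integers with dm = k and d ≤ V, and the last two sums are over ordered triples (d, l, m) of positive integers with dlm = k subject to the indicated constraints. -/

import Mathlib

/-!
Expand `log m = ∑_{l m' = m} Λ(m')` in the first sum. For a triple `(d, l, m)` with `d ≤ V`, the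
three sums together then keep exactly the terms with `d l ≤ V` and `m > U`. Grouping these by
`n = d l`, the Möbius sum `∑_{d ∣ n} μ(d)` kills every `n` except `n = 1`, which leaves `Λ(k)`
because `1 ≤ V` and `k > U`.
-/

open ArithmeticFunction Finset
open scoped ArithmeticFunction.Moebius

theorem Nat.sum_divisorsAntidiagonal_sum_divisorsAntidiagonal_snd {M : Type*} [AddCommMonoid M]
    (k : ℕ) (f : ℕ → ℕ → ℕ → M) :
    ∑ x ∈ k.divisorsAntidiagonal, ∑ y ∈ x.2.divisorsAntidiagonal, f x.1 y.1 y.2 =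
      ∑ x ∈ k.divisorsAntidiagonal, ∑ y ∈ x.1.divisorsAntidiagonal, f y.1 y.2 x.2 := by
  rw [sum_sigma', sum_sigma']
  apply sum_nbij' (fun ⟨⟨d, _⟩, ⟨l, m⟩⟩ ↦ ⟨(d * l, m), (d, l)⟩)
    (fun ⟨⟨_, m⟩, ⟨d, l⟩⟩ ↦ ⟨(d, l * m), (l, m)⟩) <;> aesop (add simp mul_assoc)

namespace ArithmeticFunction

theorem sum_divisorsAntidiagonal_moebius {R : Type*} [Ring R] (n : ℕ) :
    ∑ x ∈ n.divisorsAntidiagonal, (μ x.1 : R) = if n = 1 then 1 else 0 := by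
  rw [← one_apply, ← coe_moebius_mul_coe_zeta, mul_apply]
  refine sum_congr rfl fun x hx ↦ ?_
  simp [(Nat.ne_zero_of_mem_divisorsAntidiagonal hx).2]

theorem sum_divisorsAntidiagonal_sum_moebius_mul {R : Type*} [Ring R] {k : ℕ} (hk : k ≠ 0)
    (g : ℕ → ℕ → R) :
    ∑ x ∈ k.divisorsAntidiagonal, ∑ y ∈ x.1.divisorsAntidiagonal, (μ y.1 : R) * g (y.1 * y.2) x.2 =
      g 1 k := by
  calc _ = ∑ x ∈ k.divisorsAntidiagonal,
          (∑ y ∈ x.1.divisorsAntidiagonal, (μ y.1 : R)) * g x.1 x.2 := by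
        refine sum_congr rfl fun x _ ↦ ?_
        rw [sum_mul]
        exact sum_congr rfl fun y hy ↦ by rw [(Nat.mem_divisorsAntidiagonal.1 hy).1]
    _ = g 1 k := by
        rw [sum_eq_single_of_mem (1, k) (by simp [hk]), sum_divisorsAntidiagonal_moebius,
          if_pos rfl, one_mul]
        rintro ⟨d, m⟩ hdm hne
        have hd : d ≠ 1 := by rintro rfl; simp_all
        rw [sum_divisorsAntidiagonal_moebius, if_neg hd, zero_mul]

theorem sum_divisorsAntidiagonal_vonMangoldt (n : ℕ) :
    ∑ x ∈ n.divisorsAntidiagonal, Λ x.2 = Real.log n := by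
  rw [Nat.sum_divisorsAntidiagonal' (f := fun _ m ↦ Λ m), vonMangoldt_sum]

end ArithmeticFunction

theorem ite_sub_ite_sub_ite_eq {α M : Type*} [LinearOrder α] [AddCommGroup M] {x y m U V : α}
    (hxy : x ≤ y) (a : M) :
    ((if x ≤ V then a else 0) - (if x ≤ V ∧ m ≤ U then a else 0)) -
        (if x ≤ V ∧ U < m ∧ V < y then a else 0) =
      if y ≤ V ∧ U < m then a else 0 := by
  simp only [ite_and]
  split_ifs <;> first | order | simp

theorem vaughan_identity_general (U V : ℝ) (hV : 1 < V) (k : ℕ)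
    (hk : U < (k : ℝ)) :
    Λ k =
      (∑ x ∈ k.divisorsAntidiagonal,
        if (x.1 : ℝ) ≤ V then (μ x.1 : ℝ) * Real.log x.2 else 0)
      - (∑ x ∈ k.divisorsAntidiagonal, ∑ y ∈ x.2.divisorsAntidiagonal,
          if (x.1 : ℝ) ≤ V ∧ (y.2 : ℝ) ≤ U then (μ x.1 : ℝ) * Λ y.2 else 0)
      - (∑ x ∈ k.divisorsAntidiagonal, ∑ y ∈ x.2.divisorsAntidiagonal,
          if (x.1 : ℝ) ≤ V ∧ U < (y.2 : ℝ) ∧ V < ((x.1 * y.1 : ℕ) : ℝ)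
          then (μ x.1 : ℝ) * Λ y.2 else 0) := by
  rcases eq_or_ne k 0 with rfl | hk0
  · simp
  set g : ℕ → ℕ → ℝ := fun n m ↦ if (n : ℝ) ≤ V ∧ U < (m : ℝ) then Λ m else 0
  have hsplit : ∀ x ∈ k.divisorsAntidiagonal,
      ((if (x.1 : ℝ) ≤ V then (μ x.1 : ℝ) * Real.log x.2 else 0)
        - ∑ y ∈ x.2.divisorsAntidiagonal,
            if (x.1 : ℝ) ≤ V ∧ (y.2 : ℝ) ≤ U then (μ x.1 : ℝ) * Λ y.2 else 0)
        - ∑ y ∈ x.2.divisorsAntidiagonal,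
            (if (x.1 : ℝ) ≤ V ∧ U < (y.2 : ℝ) ∧ V < ((x.1 * y.1 : ℕ) : ℝ)
              then (μ x.1 : ℝ) * Λ y.2 else 0) =
      ∑ y ∈ x.2.divisorsAntidiagonal, (μ x.1 : ℝ) * g (x.1 * y.1) y.2 := by
    intro x _
    have hlog : (if (x.1 : ℝ) ≤ V then (μ x.1 : ℝ) * Real.log x.2 else 0) =
        ∑ y ∈ x.2.divisorsAntidiagonal, if (x.1 : ℝ) ≤ V then (μ x.1 : ℝ) * Λ y.2 else 0 := by
      rw [sum_ite_irrel, sum_const_zero, ← mul_sum, sum_divisorsAntidiagonal_vonMangoldt]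
    rw [hlog, ← sum_sub_distrib, ← sum_sub_distrib]
    refine sum_congr rfl fun y hy ↦ ?_
    have hy1 : 0 < y.1 := Nat.pos_of_ne_zero (Nat.ne_zero_of_mem_divisorsAntidiagonal hy).1
    rw [ite_sub_ite_sub_ite_eq (Nat.cast_le.2 (Nat.le_mul_of_pos_right x.1 hy1)), mul_ite, mul_zero]
  rw [← sum_sub_distrib, ← sum_sub_distrib, sum_congr rfl hsplit,
    Nat.sum_divisorsAntidiagonal_sum_divisorsAntidiagonal_snd k fun d l m ↦ (μ d : ℝ) * g (d * l) m,
    sum_divisorsAntidiagonal_sum_moebius_mul hk0]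
  simp [g, hV.le, hk]

theorem vaughan_identity (U V : ℝ) (hU : 1 < U) (hV : 1 < V) (k : ℕ)
    (hk : U < (k : ℝ)) :
    Λ k =
      (∑ x ∈ k.divisorsAntidiagonal,
        if (x.1 : ℝ) ≤ V then (μ x.1 : ℝ) * Real.log x.2 else 0)
      - (∑ x ∈ k.divisorsAntidiagonal, ∑ y ∈ x.2.divisorsAntidiagonal,
          if (x.1 : ℝ) ≤ V ∧ (y.2 : ℝ) ≤ U then (μ x.1 : ℝ) * Λ y.2 else 0)
      - (∑ x ∈ k.divisorsAntidiagonal, ∑ y ∈ x.2.divisorsAntidiagonal,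
          if (x.1 : ℝ) ≤ V ∧ U < (y.2 : ℝ) ∧ V < ((x.1 * y.1 : ℕ) : ℝ)
          then (μ x.1 : ℝ) * Λ y.2 else 0) :=
  vaughan_identity_general U V hV k hk
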